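/- Let m = m_N^s with 1/2 < s < 1, N ≥ 1. If ζ₁, ζ₂, ζ₃ ∈ ℝ² satisfy |ζ₁| ∼ |ζ₂| ∼ |ζ₃| (comparable up to fixed constants), with all ≳ N, then |1 − m(ζ₂+ζ₃)/(m(ζ₂)m(ζ₃))| ≲ m(ζ₁)/(m(ζ₂)m(ζ₃)) ≲ (|ζ₁|/N)^{1-s}, provided ζ₁ + ζ₂ + ζ₃ = 0. -/
import Mathlib

set_option maxHeartbeats 1000000


/-- Bound for the trilinear I-method symbol at comparable frequencies: let
`m(ζ) = m₀(|ζ|)` be the I-method multiplier (`1` on `|ζ| ≤ N`, `(|ζ|/N)^{s-1}` for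
`|ζ| ≥ 2N`, smooth radial non-increasing, `1/2 < s < 1`).  If `ζ₁ + ζ₂ + ζ₃ = 0`
with `|ζ₁| ∼ |ζ₂| ∼ |ζ₃|` (comparability constant `K`) and all frequencies `≳ N`,
then `|1 − m(ζ₂+ζ₃)/(m(ζ₂)m(ζ₃))| ≲ m(ζ₁)/(m(ζ₂)m(ζ₃)) ≲ (|ζ₁|/N)^{1-s}`. -/
theorem Imethod_trilinear_symbol_bound (s : ℝ) (hs : 1 / 2 < s) (hs1 : s < 1)
    (K : ℝ) (hK : 1 ≤ K) :
    ∃ C : ℝ, 0 < C ∧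
      ∀ N : ℝ, 1 ≤ N →
        ∀ m₀ : ℝ → ℝ,
          ContDiff ℝ (⊤ : ℕ∞) m₀ →
          (∀ r, 0 < m₀ r ∧ m₀ r ≤ 1) →
          AntitoneOn m₀ (Set.Ici (0 : ℝ)) →
          (∀ r : ℝ, 0 ≤ r → r ≤ N → m₀ r = 1) →
          (∀ r : ℝ, 2 * N ≤ r → m₀ r = (r / N) ^ (s - 1)) →
          ∀ ζ₁ ζ₂ ζ₃ : EuclideanSpace ℝ (Fin 2),
            ζ₁ + ζ₂ + ζ₃ = 0 →
            ‖ζ₁‖ / K ≤ ‖ζ₂‖ → ‖ζ₂‖ ≤ K * ‖ζ₁‖ →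
            ‖ζ₁‖ / K ≤ ‖ζ₃‖ → ‖ζ₃‖ ≤ K * ‖ζ₁‖ →
            N ≤ K * ‖ζ₁‖ → N ≤ K * ‖ζ₂‖ → N ≤ K * ‖ζ₃‖ →
            |1 - m₀ ‖ζ₂ + ζ₃‖ / (m₀ ‖ζ₂‖ * m₀ ‖ζ₃‖)| ≤
                C * (m₀ ‖ζ₁‖ / (m₀ ‖ζ₂‖ * m₀ ‖ζ₃‖)) ∧
              m₀ ‖ζ₁‖ / (m₀ ‖ζ₂‖ * m₀ ‖ζ₃‖) ≤ C * (‖ζ₁‖ / N) ^ (1 - s) := by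
  have hKpos : (0 : ℝ) < K := by linarith
  refine ⟨16 * K ^ 2, by positivity, ?_⟩
  intro N hN m₀ _hsmooth hpos hanti hlow hhigh ζ₁ ζ₂ ζ₃ hsum h21 h12 h31 h13 hN1 hN2 hN3
  have hNpos : (0 : ℝ) < N := by linarith
  set r := ‖ζ₁‖ with hrdef
  set r₂ := ‖ζ₂‖ with hr2def
  set r₃ := ‖ζ₃‖ with hr3def
  have hr0 : 0 ≤ r := norm_nonneg _
  have hr20 : 0 ≤ r₂ := norm_nonneg _
  have hr30 : 0 ≤ r₃ := norm_nonneg _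
  have hrpos : 0 < r := by nlinarith
  -- ζ₂ + ζ₃ = -ζ₁
  have h23 : ζ₂ + ζ₃ = -ζ₁ := by
    have h : ζ₁ + (ζ₂ + ζ₃) = 0 := by rw [← add_assoc]; exact hsum
    exact eq_neg_of_add_eq_zero_right h
  have hnorm23 : ‖ζ₂ + ζ₃‖ = r := by rw [h23, norm_neg]
  rw [hnorm23]
  set P : ℝ := (r / N) ^ (s - 1) with hPdef
  have hPpos : 0 < P := Real.rpow_pos_of_pos (div_pos hrpos hNpos) _
  -- lower bound lemma
  have L1 : ∀ ρ : ℝ, 0 ≤ ρ → ρ ≤ K * r → P / (2 * K) ≤ m₀ ρ := by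
    intro ρ hρ0 hρK
    have hKr : N ≤ K * r := hN1
    have h2N : 2 * N ≤ 2 * (K * r) := by linarith
    have hval : m₀ (2 * (K * r)) = (2 * (K * r) / N) ^ (s - 1) := hhigh _ h2N
    have hmono : m₀ (2 * (K * r)) ≤ m₀ ρ := by
      apply hanti (Set.mem_Ici.mpr hρ0) (Set.mem_Ici.mpr (by nlinarith)) (by nlinarith)
    have hrw : 2 * (K * r) / N = (2 * K) * (r / N) := by ring
    have hsplit : (2 * (K * r) / N) ^ (s - 1) = (2 * K) ^ (s - 1) * P := by
      rw [hrw, Real.mul_rpow (by positivity) (by positivity)]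
    -- (2K)^(s-1) ≥ 1/(2K)
    have h2K1 : (1 : ℝ) ≤ 2 * K := by linarith
    have hup : (2 * K) ^ (1 - s) ≤ 2 * K := by
      calc (2 * K) ^ (1 - s) ≤ (2 * K) ^ (1 : ℝ) :=
            Real.rpow_le_rpow_of_exponent_le h2K1 (by linarith)
        _ = 2 * K := Real.rpow_one _
    have hinv : (2 * K) ^ (s - 1) = ((2 * K) ^ (1 - s))⁻¹ := by
      rw [show s - 1 = -(1 - s) by ring, Real.rpow_neg (by positivity)]
    have hlb : 1 / (2 * K) ≤ (2 * K) ^ (s - 1) := by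
      rw [hinv, one_div]
      exact inv_anti₀ (Real.rpow_pos_of_pos (by positivity) _) hup
    calc P / (2 * K) = 1 / (2 * K) * P := by ring
      _ ≤ (2 * K) ^ (s - 1) * P := mul_le_mul_of_nonneg_right hlb hPpos.le
      _ = (2 * (K * r) / N) ^ (s - 1) := hsplit.symm
      _ = m₀ (2 * (K * r)) := hval.symm
      _ ≤ m₀ ρ := hmono
  -- upper bound lemma
  have L2 : ∀ ρ : ℝ, 0 < ρ → m₀ ρ ≤ 2 * (ρ / N) ^ (s - 1) := by
    intro ρ hρ
    rcases le_or_gt (2 * N) ρ with h | h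
    · rw [hhigh ρ h]
      nlinarith [Real.rpow_pos_of_pos (div_pos hρ hNpos) (s - 1)]
    · have h1 : m₀ ρ ≤ 1 := (hpos ρ).2
      have h2 : (2 : ℝ) ^ (s - 1) ≤ (ρ / N) ^ (s - 1) := by
        apply Real.rpow_le_rpow_of_nonpos (by positivity) ?_ (by linarith)
        rw [div_le_iff₀ hNpos]; linarith
      have h3 : (2 : ℝ) ^ (-1 : ℝ) ≤ (2 : ℝ) ^ (s - 1) :=
        Real.rpow_le_rpow_of_exponent_le one_le_two (by linarith)
      rw [Real.rpow_neg_one] at h3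
      norm_num at h3
      linarith
  -- bounds on the three values
  have hm1pos : 0 < m₀ r := (hpos r).1
  have hm2pos : 0 < m₀ r₂ := (hpos r₂).1
  have hm3pos : 0 < m₀ r₃ := (hpos r₃).1
  have hm3le1 : m₀ r₃ ≤ 1 := (hpos r₃).2
  have hm1low : P / (2 * K) ≤ m₀ r := L1 r hr0 (by nlinarith)
  have hm2low : P / (2 * K) ≤ m₀ r₂ := L1 r₂ hr20 h12
  have hm3low : P / (2 * K) ≤ m₀ r₃ := L1 r₃ hr30 h13
  have hm1up : m₀ r ≤ 2 * P := L2 r hrpos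
  -- upper bound for m₀ r₂ : m₀ r₂ ≤ 2 * K * P
  have hr2pos : 0 < r₂ := by
    have := div_pos hrpos hKpos; linarith
  have hm2up : m₀ r₂ ≤ 2 * (K * P) := by
    have h1 : m₀ r₂ ≤ 2 * (r₂ / N) ^ (s - 1) := L2 r₂ hr2pos
    have h2 : (r₂ / N) ^ (s - 1) ≤ (r / K / N) ^ (s - 1) := by
      apply Real.rpow_le_rpow_of_nonpos (by positivity) ?_ (by linarith)
      exact div_le_div_of_nonneg_right h21 hNpos.le
    have hrw : r / K / N = (1 / K) * (r / N) := by ring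
    have h3 : (r / K / N) ^ (s - 1) = (1 / K) ^ (s - 1) * P := by
      rw [hrw, Real.mul_rpow (by positivity) (by positivity)]
    have h4 : (1 / K) ^ (s - 1) = K ^ (1 - s) := by
      rw [one_div, Real.inv_rpow hKpos.le, ← Real.rpow_neg hKpos.le,
        show -(s - 1) = 1 - s by ring]
    have h5 : K ^ (1 - s) ≤ K := by
      calc K ^ (1 - s) ≤ K ^ (1 : ℝ) := Real.rpow_le_rpow_of_exponent_le hK (by linarith)
        _ = K := Real.rpow_one _
    calc m₀ r₂ ≤ 2 * (r₂ / N) ^ (s - 1) := h1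
      _ ≤ 2 * ((1 / K) ^ (s - 1) * P) := by rw [← h3]; linarith
      _ = 2 * (K ^ (1 - s) * P) := by rw [h4]
      _ ≤ 2 * (K * P) := by nlinarith
  have hbc : 0 < m₀ r₂ * m₀ r₃ := mul_pos hm2pos hm3pos
  have h2Kpos : (0 : ℝ) < 2 * K := by positivity
  have hm1low' : P ≤ 2 * K * m₀ r := by
    have := (div_le_iff₀ h2Kpos).mp hm1low; linarith
  have hm2low' : P ≤ 2 * K * m₀ r₂ := by
    have := (div_le_iff₀ h2Kpos).mp hm2low; linarith
  have hm3low' : P ≤ 2 * K * m₀ r₃ := by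
    have := (div_le_iff₀ h2Kpos).mp hm3low; linarith
  -- key: m₀ r₂ * m₀ r₃ ≤ 4 K^2 * m₀ r
  have hkey : m₀ r₂ * m₀ r₃ ≤ 4 * K ^ 2 * m₀ r := by
    have h1 : m₀ r₂ * m₀ r₃ ≤ 2 * (K * P) := by nlinarith
    have h2 := mul_le_mul_of_nonneg_left hm1low' hKpos.le
    nlinarith
  constructor
  · -- first inequality
    have hA : 0 < m₀ r / (m₀ r₂ * m₀ r₃) := div_pos hm1pos hbc
    have h1le : 1 ≤ 4 * K ^ 2 * (m₀ r / (m₀ r₂ * m₀ r₃)) := by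
      rw [mul_div_assoc' (4 * K ^ 2), one_le_div hbc]
      exact hkey
    have h17 : (0 : ℝ) ≤ (16 * K ^ 2 - 1) * (m₀ r / (m₀ r₂ * m₀ r₃)) :=
      mul_nonneg (by nlinarith) hA.le
    have hpos2 : (0 : ℝ) ≤ 12 * K ^ 2 * (m₀ r / (m₀ r₂ * m₀ r₃)) := by positivity
    rw [abs_le]
    constructor <;> nlinarith
  · -- second inequality
    have hPinv : (r / N) ^ (1 - s) = P⁻¹ := by
      rw [show (1 : ℝ) - s = -(s - 1) by ring, Real.rpow_neg (by positivity)]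
    rw [hPinv, show 16 * K ^ 2 * P⁻¹ = 16 * K ^ 2 / P by rw [div_eq_mul_inv],
      div_le_div_iff₀ hbc hPpos]
    nlinarith [mul_le_mul hm2low' hm3low' hPpos.le (by positivity : (0:ℝ) ≤ 2 * K * m₀ r₂),
      mul_le_mul_of_nonneg_right hm1up hPpos.le,
      (by positivity : (0:ℝ) ≤ K ^ 2 * (m₀ r₂ * m₀ r₃))]
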